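/- Let F, G : ℝ → ℝ and suppose x, y : ℝ → ℝ are twice differentiable with x(t) ≠ 0, y(t) ≠ 0, satisfying x'' = -ω(t)²x + F(y/x)/x³ and y'' = -ω(t)²y + G(y/x)/y³. If H : ℝ → ℝ is differentiable with H'(u) = u·F(u) - u⁻³·G(u) for all u ≠ 0, then I₀(t) = (1/2)(x(t)y'(t) - y(t)x'(t))² + H(y(t)/x(t)) has zero derivative, i.e., is a first integral. -/

import Mathlib

/-!
Write `W = x y' - y x'` and `u = y / x`. Then `u' = W / x²`, and in `W' = x y'' - y x''` the
`ω²` terms cancel, leaving `W' = x G(u) / y³ - y F(u) / x³`. By the choice of `H`,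
`d/dt H(u) = H'(u) W / x² = -W W'`, which is minus the derivative of `W² / 2`.
-/

theorem hasDerivAt_wronskian {x y x' y' : ℝ → ℝ} {x'' y'' t : ℝ}
    (hx : HasDerivAt x (x' t) t) (hy : HasDerivAt y (y' t) t)
    (hx' : HasDerivAt x' x'' t) (hy' : HasDerivAt y' y'' t) :
    HasDerivAt (fun s => x s * y' s - y s * x' s) (x t * y'' - y t * x'') t :=
  ((hx.mul hy').sub (hy.mul hx')).congr_deriv (by ring)

theorem hasDerivAt_div_eq_wronskian_div_sq {x y x' y' : ℝ → ℝ} {t : ℝ}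
    (hx : HasDerivAt x (x' t) t) (hy : HasDerivAt y (y' t) t) (hx0 : x t ≠ 0) :
    HasDerivAt (fun s => y s / x s) ((x t * y' t - y t * x' t) / x t ^ 2) t :=
  (hy.div hx hx0).congr_deriv (by ring)

theorem ermakov_force_balance {x y a b : ℝ} (hx : x ≠ 0) (hy : y ≠ 0) :
    x * (b / y ^ 3) - y * (a / x ^ 3) + (y / x * a - b / (y / x) ^ 3) / x ^ 2 = 0 := by
  field_simp
  ring

/-- The Ermakov invariant in the F,G form is a first integral. -/
theorem ermakov_invariant_FG_form
    (F G ω H x y x' y' : ℝ → ℝ)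
    (hx0 : ∀ t, x t ≠ 0) (hy0 : ∀ t, y t ≠ 0)
    (hx : ∀ t, HasDerivAt x (x' t) t)
    (hy : ∀ t, HasDerivAt y (y' t) t)
    (hx' : ∀ t, HasDerivAt x' (-(ω t)^2 * x t + F (y t / x t) / (x t)^3) t)
    (hy' : ∀ t, HasDerivAt y' (-(ω t)^2 * y t + G (y t / x t) / (y t)^3) t)
    (hH : ∀ u : ℝ, u ≠ 0 → HasDerivAt H (u * F u - G u / u^3) u) :
    ∀ t, deriv (fun s => (1/2) * (x s * y' s - y s * x' s)^2
      + H (y s / x s)) t = 0 := by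
  intro t
  set u := y t / x t
  set W := x t * y' t - y t * x' t
  have hW : HasDerivAt (fun s => x s * y' s - y s * x' s)
      (x t * (G u / y t ^ 3) - y t * (F u / x t ^ 3)) t :=
    (hasDerivAt_wronskian (hx t) (hy t) (hx' t) (hy' t)).congr_deriv (by ring)
  have hHu : HasDerivAt (fun s => H (y s / x s)) ((u * F u - G u / u ^ 3) * (W / x t ^ 2)) t :=
    (hH u (div_ne_zero (hy0 t) (hx0 t))).comp t
      (hasDerivAt_div_eq_wronskian_div_sq (hx t) (hy t) (hx0 t))
  have hI : HasDerivAt (fun s => (1/2) * (x s * y' s - y s * x' s)^2 + H (y s / x s)) _ t :=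
    ((hW.pow 2).const_mul (1 / 2 : ℝ)).add hHu
  rw [hI.deriv]
  calc _ = W * (x t * (G u / y t ^ 3) - y t * (F u / x t ^ 3)
          + (u * F u - G u / u ^ 3) / x t ^ 2) := by ring
    _ = 0 := by rw [ermakov_force_balance (hx0 t) (hy0 t), mul_zero]
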